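/- Let n ≥ 1 and let S : ℝ → ℝ satisfy 0 < S(x) ≤ 1 for all x. Let g : ℝ → ℝ satisfy 0 < g(t) < 1 for every t > 0, g antitone and convex on (0,∞). Let v, u, α, β : Fin n → ℝ be positive nondecreasing tuples such that for every k = 1,…,n: Σ_{i=1}^k α i ≤ Σ_{i=1}^k β i and Σ_{i=1}^k v i ≤ Σ_{i=1}^k u i. Let q₁, q₂ : {1,…,n} → ℝ be nonnegative with Σ_{m=1}^n q₁(m) = Σ_{m=1}^n q₂(m) = 1 and Σ_{m=k}^n q₂(m) ≤ Σ_{m=k}^n q₁(m) for every k. Then for every x ∈ ℝ: Σ_{m=1}^n q₁(m) · ∏_{i=1}^m (1 − g(v i)·S(x)^{α i}) ≤ Σ_{m=1}^n q₂(m) · ∏_{i=1}^m (1 − g(u i)·S(x)^{β i}). -/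

import Mathlib

open Finset

/-- Sum of the first `k` entries of the tuple `a`. -/
noncomputable def prefixSum {n : ℕ} (a : Fin n → ℝ) (k : ℕ) : ℝ :=
  ∑ i ∈ Finset.univ.filter (fun i : Fin n => (i : ℕ) < k), a i

/-- Product of the first `m` entries of the tuple `c`. -/
noncomputable def prefixProd {n : ℕ} (c : Fin n → ℝ) (m : ℕ) : ℝ :=
  ∏ i ∈ Finset.univ.filter (fun i : Fin n => (i : ℕ) < m), c i

/-! Fix `x` and put `s = S x ∈ (0, 1]`. A factor `1 - c * G t` with `c ≥ 0` and `G` convex and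
antitone gives a concave increasing `t ↦ log (1 - c * G t)`, and for antitone weights `cᵢ` the
increments of these functions decrease in `i`. For such a family, summation by parts against the
decreasing secant slopes (a weighted Tomić–Weyl inequality) shows that the sum over the first `m`
indices can only grow when increasing arguments are replaced by weakly supermajorizing increasing
ones. Used once for `v ↦ u` (weights `s ^ αᵢ`, `G = g`) and once for `α ↦ β` (weights `g uᵢ`,
`G = (s ^ ·)`), this compares the partial products pointwise. These partial products decrease in
`m`, so summing them against the stochastically smaller claim-number distribution `q₂` can only
give more, again by summation by parts. -/

section Abel

variable {R : Type*} [CommRing R] [LinearOrder R] [IsStrictOrderedRing R]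

theorem Finset.sum_range_mul_nonneg_of_antitone {lam d : ℕ → R} (hlam : Antitone lam)
    (hlam0 : ∀ i, 0 ≤ lam i) {N : ℕ} (hd : ∀ k ≤ N, 0 ≤ ∑ i ∈ range k, d i) :
    0 ≤ ∑ i ∈ range N, lam i * d i := by
  have hparts := sum_range_by_parts lam d N
  simp only [smul_eq_mul] at hparts
  rw [hparts, sub_nonneg]
  calc ∑ i ∈ range (N - 1), (lam (i + 1) - lam i) * ∑ j ∈ range (i + 1), d j
      ≤ 0 := sum_nonpos fun i hi => mul_nonpos_of_nonpos_of_nonneg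
        (sub_nonpos.2 (hlam i.le_succ)) (hd _ (by rw [mem_range] at hi; omega))
    _ ≤ lam (N - 1) * ∑ i ∈ range N, d i := mul_nonneg (hlam0 _) (hd N le_rfl)

end Abel

section Concave

variable {𝕜 : Type*} [Field 𝕜] [LinearOrder 𝕜] [IsStrictOrderedRing 𝕜]

theorem ConcaveOn.slope_le_slope_of_le_of_le {s : Set 𝕜} {f : 𝕜 → 𝕜} (hf : ConcaveOn 𝕜 s f)
    {a b a' b' : 𝕜} (ha : a ∈ s) (hb : b ∈ s) (ha' : a' ∈ s) (hb' : b' ∈ s)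
    (hab : a ≠ b) (hab' : a' ≠ b') (haa' : a ≤ a') (hbb' : b ≤ b') :
    slope f a' b' ≤ slope f a b := by
  by_cases hab'' : a = b'
  · subst hab''
    have hba' : b ≠ a' := by rintro rfl; exact hab (le_antisymm haa' hbb')
    calc slope f a' a ≤ slope f a' b := hf.slope_anti ha' ⟨hb, hba'⟩ ⟨ha, hab'.symm⟩ hbb'
      _ = slope f b a' := slope_comm _ _ _
      _ ≤ slope f b a := hf.slope_anti hb ⟨ha, hab⟩ ⟨ha', hba'.symm⟩ haa'
      _ = slope f a b := slope_comm _ _ _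
  · calc slope f a' b' = slope f b' a' := slope_comm _ _ _
      _ ≤ slope f b' a := hf.slope_anti hb' ⟨ha, hab''⟩ ⟨ha', hab'⟩ haa'
      _ = slope f a b' := slope_comm _ _ _
      _ ≤ slope f a b := hf.slope_anti ha ⟨hb, hab.symm⟩ ⟨hb', Ne.symm hab''⟩ hbb'

theorem slope_le_slope_of_antitoneOn_sub {s : Set 𝕜} {f h : 𝕜 → 𝕜}
    (hfh : AntitoneOn (f - h) s) {a b : 𝕜} (ha : a ∈ s) (hb : b ∈ s) :
    slope f a b ≤ slope h a b := by
  have := hfh.slope_nonpos ha hb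
  rw [slope_def_field, Pi.sub_apply, Pi.sub_apply, sub_sub_sub_comm, sub_div] at this
  rwa [slope_def_field, slope_def_field, ← sub_nonpos]

theorem sum_range_apply_le_of_partialSums_le {D : Set 𝕜} {f : ℕ → 𝕜 → 𝕜}
    (hmono : ∀ i, MonotoneOn (f i) D) (hconc : ∀ i, ConcaveOn 𝕜 D (f i))
    (hcross : ∀ i j, i ≤ j → AntitoneOn (f j - f i) D)
    {w z : ℕ → 𝕜} (hwD : ∀ i, w i ∈ D) (hzD : ∀ i, z i ∈ D) (hw : Monotone w)
    (hz : Monotone z) {m : ℕ} (hwz : ∀ k ≤ m, ∑ i ∈ range k, w i ≤ ∑ i ∈ range k, z i) :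
    ∑ i ∈ range m, f i (w i) ≤ ∑ i ∈ range m, f i (z i) := by
  set μ : ℕ → 𝕜 := fun i => slope (f i) (w i) (z i) with hμ
  have hμ_anti : ∀ i j, i ≤ j → w i ≠ z i → w j ≠ z j → μ j ≤ μ i := fun i j hij hi hj =>
    calc μ j ≤ slope (f i) (w j) (z j) :=
          slope_le_slope_of_antitoneOn_sub (hcross i j hij) (hwD j) (hzD j)
      _ ≤ μ i := (hconc i).slope_le_slope_of_le_of_le (hwD i) (hzD i) (hwD j) (hzD j) hi hj
          (hw hij) (hz hij)
  -- `μ` need only decrease on the indices with `w i ≠ z i`, while summation by parts wants a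
  -- nonnegative antitone weight; `lam` is such a weight and agrees with `μ` on those indices.
  set lam : ℕ → 𝕜 := fun i =>
    (insert 0 (((Ico i m).filter fun j => w j ≠ z j).image μ)).max' (insert_nonempty _ _)
  have hlam_anti : Antitone lam := fun i i' h => max'_subset _ <| insert_subset_insert _ <|
    image_subset_image <| filter_subset_filter _ <| Ico_subset_Ico_left h
  have hlam0 : ∀ i, 0 ≤ lam i := fun i => le_max' _ _ (mem_insert_self _ _)
  have hlam : ∀ i < m, w i ≠ z i → lam i = μ i := by
    intro i hi hne
    refine le_antisymm (max'_le _ _ _ fun y hy => ?_) (le_max' _ _ ?_)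
    · rcases mem_insert.1 hy with rfl | hy
      · exact (hmono i).slope_nonneg (hwD i) (hzD i)
      · obtain ⟨j, hj, rfl⟩ := mem_image.1 hy
        obtain ⟨⟨hij, -⟩, hj⟩ := mem_filter.1 hj |>.imp_left mem_Ico.1
        exact hμ_anti i j hij hne hj
    · exact mem_insert_of_mem (mem_image_of_mem μ (mem_filter.2 ⟨mem_Ico.2 ⟨le_rfl, hi⟩, hne⟩))
  have hterm : ∀ i ∈ range m, f i (z i) - f i (w i) = lam i * (z i - w i) := by
    intro i hi
    by_cases hne : w i = z i
    · simp [hne]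
    · rw [hlam i (mem_range.1 hi) hne, mul_comm, hμ]
      exact (sub_smul_slope (f i) (w i) (z i)).symm
  have habel := sum_range_mul_nonneg_of_antitone hlam_anti hlam0 (d := fun i => z i - w i)
    fun k hk => by simpa only [sum_sub_distrib, sub_nonneg] using hwz k hk
  rw [← sum_congr rfl hterm, sum_sub_distrib, sub_nonneg] at habel
  exact habel

end Concave

theorem ConcaveOn.log {D : Set ℝ} {h : ℝ → ℝ} (hh : ConcaveOn ℝ D h)
    (hpos : ∀ x ∈ D, 0 < h x) : ConcaveOn ℝ D (fun x => Real.log (h x)) := by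
  refine ⟨hh.1, fun x hx y hy a b ha hb hab => ?_⟩
  calc a • Real.log (h x) + b • Real.log (h y) ≤ Real.log (a • h x + b • h y) :=
        strictConcaveOn_log_Ioi.concaveOn.2 (hpos x hx) (hpos y hy) ha hb hab
    _ ≤ Real.log (h (a • x + b • y)) :=
        Real.log_le_log ((convex_Ioi (0 : ℝ)) (hpos x hx) (hpos y hy) ha hb hab)
          (hh.2 hx hy ha hb hab)

theorem prod_range_one_sub_mul_le_of_partialSums_le {D : Set ℝ} {G : ℝ → ℝ}
    (hGconv : ConvexOn ℝ D G) (hGanti : AntitoneOn G D) {c : ℕ → ℝ} (hc0 : ∀ i, 0 ≤ c i)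
    (hc : Antitone c) (hlt : ∀ i, ∀ t ∈ D, c i * G t < 1)
    {w z : ℕ → ℝ} (hwD : ∀ i, w i ∈ D) (hzD : ∀ i, z i ∈ D) (hw : Monotone w)
    (hz : Monotone z) {m : ℕ} (hwz : ∀ k ≤ m, ∑ i ∈ range k, w i ≤ ∑ i ∈ range k, z i) :
    ∏ i ∈ range m, (1 - c i * G (w i)) ≤ ∏ i ∈ range m, (1 - c i * G (z i)) := by
  have hpos : ∀ i, ∀ t ∈ D, 0 < 1 - c i * G t := fun i t ht => sub_pos.2 (hlt i t ht)
  rw [← Real.log_le_log_iff (prod_pos fun i _ => hpos i _ (hwD i))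
      (prod_pos fun i _ => hpos i _ (hzD i)),
    Real.log_prod fun i _ => (hpos i _ (hwD i)).ne',
    Real.log_prod fun i _ => (hpos i _ (hzD i)).ne']
  refine sum_range_apply_le_of_partialSums_le (f := fun i t => Real.log (1 - c i * G t))
    (fun i a ha b hb hab => ?_) (fun i => ?_) (fun i j hij a ha b hb hab => ?_) hwD hzD hw hz hwz
  · exact Real.log_le_log (hpos i a ha) (by nlinarith [hGanti ha hb hab, hc0 i])
  · exact ((concaveOn_const 1 hGconv.1).sub (hGconv.smul (hc0 i))).log (hpos i)
  · have hprod := Real.log_le_log (mul_pos (hpos j b hb) (hpos i a ha))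
      (show (1 - c j * G b) * (1 - c i * G a) ≤ (1 - c j * G a) * (1 - c i * G b) by
        nlinarith [mul_nonneg (sub_nonneg.2 (hc hij)) (sub_nonneg.2 (hGanti ha hb hab))])
    rw [Real.log_mul (hpos j b hb).ne' (hpos i a ha).ne',
      Real.log_mul (hpos j a ha).ne' (hpos i b hb).ne'] at hprod
    simp only [Pi.sub_apply]
    linarith

theorem prod_range_one_sub_mul_rpow_le {g : ℝ → ℝ} (hg : ∀ t > 0, 0 < g t ∧ g t < 1)
    (hg_anti : AntitoneOn g (Set.Ioi 0)) (hg_conv : ConvexOn ℝ (Set.Ioi 0) g) {s : ℝ}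
    (hs0 : 0 < s) (hs1 : s ≤ 1) {v u α β : ℕ → ℝ} (hv : ∀ i, 0 < v i) (hu : ∀ i, 0 < u i)
    (hα : ∀ i, 0 < α i) (hβ : ∀ i, 0 < β i) (hvm : Monotone v) (hum : Monotone u)
    (hαm : Monotone α) (hβm : Monotone β) {m : ℕ}
    (hvu : ∀ k ≤ m, ∑ i ∈ range k, v i ≤ ∑ i ∈ range k, u i)
    (hαβ : ∀ k ≤ m, ∑ i ∈ range k, α i ≤ ∑ i ∈ range k, β i) :
    ∏ i ∈ range m, (1 - g (v i) * s ^ α i) ≤ ∏ i ∈ range m, (1 - g (u i) * s ^ β i) := by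
  have hrpow_anti : AntitoneOn (fun t : ℝ => s ^ t) (Set.Ioi 0) :=
    fun _ _ _ _ h => Real.rpow_le_rpow_of_exponent_ge hs0 hs1 h
  have hrpow_le_one : ∀ i, s ^ α i ≤ 1 := fun i => Real.rpow_le_one hs0.le hs1 (hα i).le
  calc ∏ i ∈ range m, (1 - g (v i) * s ^ α i) = ∏ i ∈ range m, (1 - s ^ α i * g (v i)) := by
        simp only [mul_comm]
    _ ≤ ∏ i ∈ range m, (1 - s ^ α i * g (u i)) :=
        prod_range_one_sub_mul_le_of_partialSums_le hg_conv hg_anti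
          (fun _ => (Real.rpow_pos_of_pos hs0 _).le) (fun i j h => hrpow_anti (hα i) (hα j) (hαm h))
          (fun i t ht => by nlinarith [hg t ht, hrpow_le_one i, Real.rpow_pos_of_pos hs0 (α i)])
          hv hu hvm hum hvu
    _ = ∏ i ∈ range m, (1 - g (u i) * s ^ α i) := by simp only [mul_comm]
    _ ≤ ∏ i ∈ range m, (1 - g (u i) * s ^ β i) :=
        prod_range_one_sub_mul_le_of_partialSums_le
          ((convexOn_rpow_left hs0).subset (Set.subset_univ _) (convex_Ioi 0)) hrpow_anti
          (fun i => (hg _ (hu i)).1.le) (fun i j h => hg_anti (hu i) (hu j) (hum h))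
          (fun i t ht => by
            nlinarith [hg _ (hu i), Real.rpow_le_one hs0.le hs1 (le_of_lt ht),
              Real.rpow_pos_of_pos hs0 t])
          hα hβ hαm hβm hαβ

@[to_additive]
theorem Fin.prod_filter_val_lt {M : Type*} [CommMonoid M] {n k : ℕ} (f : ℕ → M) (hk : k ≤ n) :
    ∏ i ∈ univ.filter (fun i : Fin n => (i : ℕ) < k), f i = ∏ j ∈ range k, f j := by
  rw [prod_filter, Fin.prod_univ_eq_prod_range (fun j => if j < k then f j else 1), ← prod_filter]
  congr 1
  ext j
  simp only [mem_filter, mem_range]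
  omega

-- Repeating the last entry, rather than padding with a constant, keeps monotonicity.
def Fin.clampExtend {α : Type*} {n : ℕ} (hn : 1 ≤ n) (a : Fin n → α) (j : ℕ) : α :=
  a ⟨min j (n - 1), by omega⟩

theorem Fin.clampExtend_val {α : Type*} {n : ℕ} (hn : 1 ≤ n) (a : Fin n → α) (i : Fin n) :
    Fin.clampExtend hn a i = a i :=
  congrArg a (Fin.ext (min_eq_left (by omega)))

theorem Monotone.fin_clampExtend {α : Type*} [Preorder α] {n : ℕ} (hn : 1 ≤ n) {a : Fin n → α}
    (ha : Monotone a) : Monotone (Fin.clampExtend hn a) :=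
  fun _ _ h => ha (Fin.mk_le_mk.2 (min_le_min_right _ h))

theorem prefixSum_eq_sum_range {n k : ℕ} (hn : 1 ≤ n) (a : Fin n → ℝ) (hk : k ≤ n) :
    prefixSum a k = ∑ j ∈ range k, Fin.clampExtend hn a j := by
  rw [prefixSum, ← Fin.sum_filter_val_lt _ hk]
  simp only [Fin.clampExtend_val]

theorem prefixProd_eq_prod_range {n k : ℕ} (hn : 1 ≤ n) (c : Fin n → ℝ) (hk : k ≤ n) :
    prefixProd c k = ∏ j ∈ range k, Fin.clampExtend hn c j := by
  rw [prefixProd, ← Fin.prod_filter_val_lt _ hk]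
  simp only [Fin.clampExtend_val]

theorem sum_range_clampExtend_le {n : ℕ} (hn : 1 ≤ n) {a b : Fin n → ℝ}
    (hab : ∀ k, 1 ≤ k → k ≤ n → prefixSum a k ≤ prefixSum b k) {k : ℕ} (hk : k ≤ n) :
    ∑ j ∈ range k, Fin.clampExtend hn a j ≤ ∑ j ∈ range k, Fin.clampExtend hn b j := by
  rcases k.eq_zero_or_pos with rfl | hk0
  · simp
  · rw [← prefixSum_eq_sum_range hn a hk, ← prefixSum_eq_sum_range hn b hk]
    exact hab k hk0 hk

theorem prefixProd_antitone {n : ℕ} {c : Fin n → ℝ} (hc0 : ∀ i, 0 ≤ c i) (hc1 : ∀ i, c i ≤ 1) :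
    Antitone (prefixProd c) := fun k l hkl =>
  prod_anti_set_of_le_one hc0 hc1 fun i hi => by
    simp only [mem_filter, mem_univ, true_and] at hi ⊢
    omega

theorem sum_Icc_mul_le_of_tail_le {P q₁ q₂ : ℕ → ℝ} (hP : Antitone P) (hP0 : ∀ m, 0 ≤ P m)
    {n : ℕ} (hsum : ∑ m ∈ Icc 1 n, q₁ m = ∑ m ∈ Icc 1 n, q₂ m)
    (htail : ∀ k, 1 ≤ k → k ≤ n → ∑ m ∈ Icc k n, q₂ m ≤ ∑ m ∈ Icc k n, q₁ m) :
    ∑ m ∈ Icc 1 n, q₁ m * P m ≤ ∑ m ∈ Icc 1 n, q₂ m * P m := by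
  have hshift : ∀ (f : ℕ → ℝ) k, ∑ m ∈ Icc 1 k, f m = ∑ i ∈ range k, f (i + 1) := fun f k => by
    rw [range_eq_Ico, sum_Ico_add' f, ← Ico_add_one_right_eq_Icc]
  have hsplit : ∀ (f : ℕ → ℝ) k, k ≤ n →
      ∑ m ∈ Icc 1 k, f m + ∑ m ∈ Icc (k + 1) n, f m = ∑ m ∈ Icc 1 n, f m := fun f k hk => by
    simp only [Icc_add_one_left_eq_Ioc]
    exact sum_Ioc_consecutive f k.zero_le hk
  have hpartial : ∀ k ≤ n, 0 ≤ ∑ i ∈ range k, (q₂ (i + 1) - q₁ (i + 1)) := by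
    intro k hk
    rw [sum_sub_distrib, ← hshift q₂, ← hshift q₁, sub_nonneg]
    have h₁ := hsplit q₁ k hk
    have h₂ := hsplit q₂ k hk
    rcases hk.lt_or_eq with hk | rfl
    · linarith [htail (k + 1) (by omega) hk]
    · linarith
  have habel := sum_range_mul_nonneg_of_antitone (lam := fun i => P (i + 1))
    (fun _ _ h => hP (by omega)) (fun i => hP0 (i + 1)) hpartial
  rw [← hshift (fun m => P m * (q₂ m - q₁ m))] at habel
  simp only [mul_sub, sum_sub_distrib, sub_nonneg] at habel
  simpa only [mul_comm] using habel

theorem stmt_9_general {n : ℕ} (hn : 1 ≤ n) (S g : ℝ → ℝ)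
    (hS : ∀ x : ℝ, 0 < S x ∧ S x ≤ 1)
    (hg : ∀ t > 0, 0 < g t ∧ g t < 1)
    (hg_anti : AntitoneOn g (Set.Ioi 0))
    (hg_conv : ConvexOn ℝ (Set.Ioi 0) g)
    (v u α β : Fin n → ℝ)
    (hv : ∀ i, 0 < v i) (hu : ∀ i, 0 < u i)
    (hα : ∀ i, 0 < α i) (hβ : ∀ i, 0 < β i)
    (hvm : Monotone v) (hum : Monotone u) (hαm : Monotone α) (hβm : Monotone β)
    (hmajα : ∀ k, 1 ≤ k → k ≤ n → prefixSum α k ≤ prefixSum β k)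
    (hmajv : ∀ k, 1 ≤ k → k ≤ n → prefixSum v k ≤ prefixSum u k)
    (q₁ q₂ : ℕ → ℝ)
    (hq₁ : ∀ m ∈ Finset.Icc 1 n, 0 ≤ q₁ m)
    (hq₁sum : ∑ m ∈ Finset.Icc 1 n, q₁ m = 1)
    (hq₂sum : ∑ m ∈ Finset.Icc 1 n, q₂ m = 1)
    (hst : ∀ k, 1 ≤ k → k ≤ n →
      ∑ m ∈ Finset.Icc k n, q₂ m ≤ ∑ m ∈ Finset.Icc k n, q₁ m) :
    ∀ x : ℝ,
      ∑ m ∈ Finset.Icc 1 n,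
          q₁ m * prefixProd (fun i => 1 - g (v i) * S x ^ α i) m ≤
        ∑ m ∈ Finset.Icc 1 n,
          q₂ m * prefixProd (fun i => 1 - g (u i) * S x ^ β i) m := by
  intro x
  obtain ⟨hs0, hs1⟩ := hS x
  have hfactor0 : ∀ i, 0 ≤ 1 - g (u i) * S x ^ β i := fun i => by
    nlinarith [hg _ (hu i), Real.rpow_le_one hs0.le hs1 (hβ i).le, Real.rpow_pos_of_pos hs0 (β i)]
  have hfactor1 : ∀ i, 1 - g (u i) * S x ^ β i ≤ 1 := fun i => by
    nlinarith [hg _ (hu i), Real.rpow_pos_of_pos hs0 (β i)]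
  have hprefix : ∀ m ≤ n, prefixProd (fun i => 1 - g (v i) * S x ^ α i) m ≤
      prefixProd (fun i => 1 - g (u i) * S x ^ β i) m := fun m hm => by
    rw [prefixProd_eq_prod_range hn _ hm, prefixProd_eq_prod_range hn _ hm]
    exact prod_range_one_sub_mul_rpow_le hg hg_anti hg_conv hs0 hs1 (fun _ => hv _)
      (fun _ => hu _) (fun _ => hα _) (fun _ => hβ _) (hvm.fin_clampExtend hn)
      (hum.fin_clampExtend hn) (hαm.fin_clampExtend hn) (hβm.fin_clampExtend hn)
      (fun k hk => sum_range_clampExtend_le hn hmajv (hk.trans hm))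
      (fun k hk => sum_range_clampExtend_le hn hmajα (hk.trans hm))
  calc _ ≤ ∑ m ∈ Icc 1 n, q₁ m * prefixProd (fun i => 1 - g (u i) * S x ^ β i) m :=
        sum_le_sum fun m hm => mul_le_mul_of_nonneg_left (hprefix m (mem_Icc.1 hm).2) (hq₁ m hm)
    _ ≤ _ := sum_Icc_mul_le_of_tail_le (prefixProd_antitone hfactor0 hfactor1)
        (fun _ => prod_nonneg fun i _ => hfactor0 i) (hq₁sum.trans hq₂sum.symm) hst

/-- Theorem 3.8: proportional hazard rate severities, largest claim amounts
with random numbers of claims, usual stochastic order. -/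
theorem stmt_9 {n : ℕ} (hn : 1 ≤ n) (S g : ℝ → ℝ)
    (hS : ∀ x : ℝ, 0 < S x ∧ S x ≤ 1)
    (hg : ∀ t > 0, 0 < g t ∧ g t < 1)
    (hg_anti : AntitoneOn g (Set.Ioi 0))
    (hg_conv : ConvexOn ℝ (Set.Ioi 0) g)
    (v u α β : Fin n → ℝ)
    (hv : ∀ i, 0 < v i) (hu : ∀ i, 0 < u i)
    (hα : ∀ i, 0 < α i) (hβ : ∀ i, 0 < β i)
    (hvm : Monotone v) (hum : Monotone u) (hαm : Monotone α) (hβm : Monotone β)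
    (hmajα : ∀ k, 1 ≤ k → k ≤ n → prefixSum α k ≤ prefixSum β k)
    (hmajv : ∀ k, 1 ≤ k → k ≤ n → prefixSum v k ≤ prefixSum u k)
    (q₁ q₂ : ℕ → ℝ)
    (hq₁ : ∀ m ∈ Finset.Icc 1 n, 0 ≤ q₁ m) (hq₂ : ∀ m ∈ Finset.Icc 1 n, 0 ≤ q₂ m)
    (hq₁sum : ∑ m ∈ Finset.Icc 1 n, q₁ m = 1)
    (hq₂sum : ∑ m ∈ Finset.Icc 1 n, q₂ m = 1)
    (hst : ∀ k, 1 ≤ k → k ≤ n →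
      ∑ m ∈ Finset.Icc k n, q₂ m ≤ ∑ m ∈ Finset.Icc k n, q₁ m) :
    ∀ x : ℝ,
      ∑ m ∈ Finset.Icc 1 n,
          q₁ m * prefixProd (fun i => 1 - g (v i) * S x ^ α i) m ≤
        ∑ m ∈ Finset.Icc 1 n,
          q₂ m * prefixProd (fun i => 1 - g (u i) * S x ^ β i) m :=
  stmt_9_general hn S g hS hg hg_anti hg_conv v u α β hv hu hα hβ hvm hum hαm hβm hmajα hmajv q₁ q₂
    hq₁ hq₁sum hq₂sum hst
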